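/- A separable metrisable topological group G admits a metrically proper compatible left-invariant metric if and only if G has the local property (OB), i.e., there is a neighbourhood of the identity having property (OB) relative to G. -/

import Mathlib

/-!
A compatible left-invariant metric `d` is metrically proper exactly when every `d`-ball has
(OB): a sequence inside a `d`-ball that is unbounded for some compatible left-invariant `d'` tends
to infinity without leaving the ball, while a sequence with `d' (g n) 1 → ∞` eventually leaves
every `d`-ball on which `d'` is bounded. In particular the unit ball of a metrically proper metric
is an (OB) neighbourhood of `1`.

Conversely, let `U` be an (OB) neighbourhood of `1`. By Birkhoff–Kakutani there is a compatible
left-invariant metric `e`, which we rescale so that its `2`-ball lies in `U`. Fix a dense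
sequence `u` and let `d` be the largest left-invariant pseudometric with `d 1 g ≤ w g`, where
`w g = e 1 g` if `e 1 g < 1`, and otherwise `w g = m + 1` for the first `m` with `g` or `g⁻¹`
within `e`-distance `1` of `u m`. Then `min (e x y) 1 ≤ d x y`, and `d x y ≤ e x y` whenever
`e x y < 1`, so `d` is compatible. A chain
of `w`-cost less than `r` consists of at most `r` long steps, each in one of finitely many
translates of `U`, and of runs of short steps, which can be grouped into blocks of `e`-length less
than `2`, all but one of `w`-cost at least `1`; hence `d'` is bounded on the `d`-ball of radius `r`.
-/

open Filter Topology
open scoped Pointwise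

/-- A (plain) metric given as a distance function. -/
def IsMetric {G : Type*} (d : G → G → ℝ) : Prop :=
  (∀ x y, d x y = 0 ↔ x = y) ∧ (∀ x y, d x y = d y x) ∧ ∀ x y z, d x z ≤ d x y + d y z

/-- The metric `d` induces the topology of `G`. -/
def IsCompatible (G : Type*) [TopologicalSpace G] (d : G → G → ℝ) : Prop :=
  ∀ (x : G) (s : Set G), s ∈ nhds x ↔ ∃ ε > (0 : ℝ), {y : G | d x y < ε} ⊆ s

/-- A compatible left-invariant metric on a topological group. -/
def IsCompatibleLeftInvariantMetric (G : Type*) [Group G] [TopologicalSpace G]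
    (d : G → G → ℝ) : Prop :=
  IsMetric d ∧ IsCompatible G d ∧ ∀ h g f : G, d (h * g) (h * f) = d g f

/-- A set has finite diameter with respect to `d`. -/
def FiniteDiam {G : Type*} (d : G → G → ℝ) (A : Set G) : Prop :=
  ∃ C : ℝ, ∀ x ∈ A, ∀ y ∈ A, d x y ≤ C

/-- `A` has property (OB) relative to `G`: finite diameter for every compatible
left-invariant metric. -/
def HasRelPropOB (G : Type*) [Group G] [TopologicalSpace G] (A : Set G) : Prop :=
  ∀ d : G → G → ℝ, IsCompatibleLeftInvariantMetric G d → FiniteDiam d A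

/-- A sequence tends to infinity in `G` if some compatible left-invariant metric
witnesses `d (g n) 1 → ∞`. -/
def TendsToInfinity (G : Type*) [Group G] [TopologicalSpace G] (g : ℕ → G) : Prop :=
  ∃ d : G → G → ℝ, IsCompatibleLeftInvariantMetric G d ∧
    Filter.Tendsto (fun n => d (g n) 1) Filter.atTop Filter.atTop

/-- A compatible left-invariant metric is metrically proper if `d (g n) 1 → ∞`
whenever `g n → ∞`. -/
def MetricallyProperMetric (G : Type*) [Group G] [TopologicalSpace G]
    (d : G → G → ℝ) : Prop :=
  ∀ g : ℕ → G, TendsToInfinity G g →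
    Filter.Tendsto (fun n => d (g n) 1) Filter.atTop Filter.atTop

open scoped NNReal

section ChainDist

variable {X : Type*}

def chainCost (δ : X → X → ℝ≥0) (x : X) (l : List X) (y : X) : ℝ≥0 :=
  ((x :: l).zipWith δ (l ++ [y])).sum

/-- The largest pseudometric below `δ`, as in `PseudoMetricSpace.ofPreNNDist`. -/
noncomputable def chainDist (δ : X → X → ℝ≥0) (x y : X) : ℝ≥0 :=
  ⨅ l : List X, chainCost δ x l y

variable {δ : X → X → ℝ≥0}

@[simp]
lemma chainCost_nil (x y : X) : chainCost δ x [] y = δ x y := by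
  simp [chainCost]

@[simp]
lemma chainCost_cons (x z : X) (l : List X) (y : X) :
    chainCost δ x (z :: l) y = δ x z + chainCost δ z l y := by
  simp [chainCost]

lemma chainDist_le (x y : X) : chainDist δ x y ≤ δ x y :=
  (ciInf_le (OrderBot.bddBelow _) []).trans_eq (chainCost_nil x y)

lemma chainDist_comm (h0 : ∀ x, δ x x = 0) (hs : ∀ x y, δ x y = δ y x) (x y : X) :
    chainDist δ x y = chainDist δ y x :=
  NNReal.coe_injective ((PseudoMetricSpace.ofPreNNDist δ h0 hs).dist_comm x y)

lemma chainDist_triangle (h0 : ∀ x, δ x x = 0) (hs : ∀ x y, δ x y = δ y x) (x y z : X) :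
    (chainDist δ x z : ℝ) ≤ chainDist δ x y + chainDist δ y z :=
  (PseudoMetricSpace.ofPreNNDist δ h0 hs).dist_triangle x y z

lemma le_two_mul_chainDist (h0 : ∀ x, δ x x = 0) (hs : ∀ x y, δ x y = δ y x)
    (hδ : ∀ x₁ x₂ x₃ x₄, δ x₁ x₄ ≤ 2 * max (δ x₁ x₂) (max (δ x₂ x₃) (δ x₃ x₄))) (x y : X) :
    (δ x y : ℝ) ≤ 2 * chainDist δ x y :=
  PseudoMetricSpace.le_two_mul_dist_ofPreNNDist δ h0 hs hδ x y

lemma le_chainDist {f : X → X → ℝ} (hf : ∀ x y z, f x z ≤ f x y + f y z)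
    (hfδ : ∀ x y, f x y ≤ δ x y) (x y : X) : f x y ≤ chainDist δ x y := by
  rw [chainDist, NNReal.coe_iInf]
  refine le_ciInf fun l => ?_
  induction l generalizing x with
  | nil => simpa using hfδ x y
  | cons z l ih =>
    rw [chainCost_cons, NNReal.coe_add]
    linarith [hf x z y, hfδ x z, ih z]

section Coarse

variable {e d : X → X → ℝ} {C D K B : ℝ}

lemma exists_run_split_cons (he : ∀ x y z, e x z ≤ e x y + e y z) (he0 : ∀ x, e x x = 0)
    (hd : ∀ x y z, d x z ≤ d x y + d y z) (hd0 : ∀ x, d x x = 0)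
    (hC : ∀ x y, e x y < 2 → d x y ≤ C) (hCK : C ≤ K) (hDK : C + D ≤ K)
    {x x₁ z y : X} {w c t : ℝ} (hw0 : 0 ≤ w) (hw : (e x x₁ ≤ w ∧ w < 1) ∨ (1 ≤ w ∧ d x x₁ ≤ D))
    (ht0 : 0 ≤ t) (ht1 : t ≤ 1) (hz : e x₁ z ≤ t) (hzy : d z y ≤ K * (c - t)) :
    ∃ z' t', 0 ≤ t' ∧ t' ≤ 1 ∧ e x z' ≤ t' ∧ d z' y ≤ K * (w + c - t') := by
  have hC0 : 0 ≤ C := (hd0 x).symm.trans_le (hC x x (by rw [he0]; norm_num))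
  rcases hw with ⟨hxx₁, hw1⟩ | ⟨hw1, hxx₁⟩
  · by_cases hrun : w + t ≤ 1
    · exact ⟨z, w + t, by linarith, hrun, by linarith [he x x₁ z], by linarith⟩
    · have hxz : d x z ≤ C := hC x z (by linarith [he x x₁ z])
      refine ⟨x, 0, le_rfl, zero_le_one, (he0 x).le, ?_⟩
      nlinarith [hd x z y]
  · have hx₁z : d x₁ z ≤ C := hC x₁ z (by linarith)
    refine ⟨x, 0, le_rfl, zero_le_one, (he0 x).le, ?_⟩
    nlinarith [hd x x₁ y, hd x₁ z y]

/- `z` ends the current run of short steps and `t` is its `e`-length; the part of the chain after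
`z` is already paid for at rate `K`. -/
lemma exists_run_split (he : ∀ x y z, e x z ≤ e x y + e y z) (he0 : ∀ x, e x x = 0)
    (hd : ∀ x y z, d x z ≤ d x y + d y z) (hd0 : ∀ x, d x x = 0)
    (hC : ∀ x y, e x y < 2 → d x y ≤ C) (hCK : C ≤ K) (hDK : C + D ≤ K)
    (hstep : ∀ x y, (δ x y : ℝ) < B →
      (e x y ≤ δ x y ∧ (δ x y : ℝ) < 1) ∨ (1 ≤ (δ x y : ℝ) ∧ d x y ≤ D))
    (l : List X) (x y : X) (hl : (chainCost δ x l y : ℝ) < B) :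
    ∃ z t, 0 ≤ t ∧ t ≤ 1 ∧ e x z ≤ t ∧ d z y ≤ K * (chainCost δ x l y - t) := by
  induction l generalizing x with
  | nil =>
    rw [chainCost_nil] at hl ⊢
    simpa using exists_run_split_cons he he0 hd hd0 hC hCK hDK (x₁ := y) (c := 0) (δ x y).2
      (hstep x y hl) le_rfl zero_le_one (he0 y).le (by simp [hd0])
  | cons x₁ l ih =>
    rw [chainCost_cons, NNReal.coe_add] at hl ⊢
    have hw := (δ x x₁).2
    have hc := (chainCost δ x₁ l y).2
    obtain ⟨z, t, ht0, ht1, hz, hzy⟩ := ih x₁ (by linarith)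
    exact exists_run_split_cons he he0 hd hd0 hC hCK hDK hw (hstep x x₁ (by linarith))
      ht0 ht1 hz hzy

lemma exists_bound_of_chainDist_lt (he : ∀ x y z, e x z ≤ e x y + e y z) (he0 : ∀ x, e x x = 0)
    (hd : ∀ x y z, d x z ≤ d x y + d y z) (hd0 : ∀ x, d x x = 0)
    (hC : ∀ x y, e x y < 2 → d x y ≤ C)
    (hstep : ∀ x y, (δ x y : ℝ) < B →
      (e x y ≤ δ x y ∧ (δ x y : ℝ) < 1) ∨ (1 ≤ (δ x y : ℝ) ∧ d x y ≤ D)) :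
    ∃ R, ∀ x y, (chainDist δ x y : ℝ) < B → d x y ≤ R := by
  set K := C + max D 0
  refine ⟨C + K * B, fun x y hxy => ?_⟩
  have hK : 0 ≤ K := add_nonneg ((hd0 x).symm.trans_le (hC x x (by rw [he0]; norm_num)))
    (le_max_right D 0)
  rw [chainDist, NNReal.coe_iInf] at hxy
  obtain ⟨l, hl⟩ := exists_lt_of_ciInf_lt hxy
  obtain ⟨z, t, ht0, ht1, hz, hzy⟩ := exists_run_split (K := K) he he0 hd hd0 hC
    (by simp [K]) (by simp [K]) hstep l x y hl
  have hxz : d x z ≤ C := hC x z (by linarith)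
  nlinarith [hd x z y]

end Coarse

end ChainDist

section CompatibleMetric

variable {G : Type*} [Group G] [TopologicalSpace G] [IsTopologicalGroup G] {d : G → G → ℝ}

lemma isCompatible_of_hasBasis (hinv : ∀ h g f, d (h * g) (h * f) = d g f)
    (hbasis : (𝓝 (1 : G)).HasBasis (fun ε : ℝ => 0 < ε) fun ε => {y | d 1 y < ε}) :
    IsCompatible G d := by
  intro x s
  have hx := hbasis.map (x * ·)
  rw [map_mul_left_nhds_one] at hx
  have hball : ∀ ε, (x * ·) '' {y | d 1 y < ε} = {y | d x y < ε} := by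
    intro ε
    ext y
    rw [Set.image_mul_left, Set.mem_preimage, Set.mem_ofPred_eq, Set.mem_ofPred_eq, ← hinv x,
      mul_one, mul_inv_cancel_left]
  simp only [hx.mem_iff, hball]

lemma isCompatibleLeftInvariantMetric_of_hasBasis [T1Space G] (hself : ∀ x, d x x = 0)
    (hcomm : ∀ x y, d x y = d y x) (htri : ∀ x y z, d x z ≤ d x y + d y z)
    (hinv : ∀ h g f, d (h * g) (h * f) = d g f)
    (hbasis : (𝓝 (1 : G)).HasBasis (fun ε : ℝ => 0 < ε) fun ε => {y | d 1 y < ε}) :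
    IsCompatibleLeftInvariantMetric G d := by
  refine ⟨⟨fun x y => ⟨fun hxy => ?_, fun h => h ▸ hself x⟩, hcomm, htri⟩,
    isCompatible_of_hasBasis hinv hbasis, hinv⟩
  by_contra hne
  have hne' : x⁻¹ * y ≠ 1 := by rwa [ne_eq, inv_mul_eq_one]
  obtain ⟨ε, hε, hball⟩ := hbasis.mem_iff.1 (isOpen_compl_singleton.mem_nhds hne'.symm)
  have : d 1 (x⁻¹ * y) < ε := by
    rw [← hinv x, mul_one, mul_inv_cancel_left, hxy]
    exact hε
  exact hball this rfl

end CompatibleMetric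

section WordDist

variable {G : Type*} [Group G]

noncomputable def wordDist (w : G → ℝ≥0) (x y : G) : ℝ :=
  chainDist (fun a b => w (a⁻¹ * b)) x y

variable {w : G → ℝ≥0}

lemma wordDist_le (x y : G) : wordDist w x y ≤ w (x⁻¹ * y) :=
  NNReal.coe_le_coe.2 (chainDist_le x y)

lemma wordDist_mul_left (g x y : G) : wordDist w (g * x) (g * y) = wordDist w x y := by
  have hcost : ∀ x l y, chainCost (fun a b => w (a⁻¹ * b)) (g * x) (l.map (g * ·)) (g * y) =
      chainCost (fun a b => w (a⁻¹ * b)) x l y := by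
    intro x l y
    induction l generalizing x with
    | nil => simp [mul_assoc]
    | cons z l ih => simp [ih, mul_assoc]
  unfold wordDist chainDist
  rw [← (List.map_surjective_iff.2 (mul_left_surjective g)).iInf_comp]
  simp only [hcost]

lemma isCompatibleLeftInvariantMetric_wordDist [TopologicalSpace G] [IsTopologicalGroup G]
    [T1Space G] (h1 : w 1 = 0) (hinv : ∀ g, w g⁻¹ = w g)
    (hbasis : (𝓝 (1 : G)).HasBasis (fun ε : ℝ => 0 < ε) fun ε => {y | wordDist w 1 y < ε}) :
    IsCompatibleLeftInvariantMetric G (wordDist w) := by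
  have h0 : ∀ x : G, w (x⁻¹ * x) = 0 := by simp [h1]
  have hs : ∀ x y : G, w (x⁻¹ * y) = w (y⁻¹ * x) := by
    intro x y
    rw [← hinv, mul_inv_rev, inv_inv]
  refine isCompatibleLeftInvariantMetric_of_hasBasis (fun x => ?_)
    (fun x y => congrArg _ (chainDist_comm h0 hs x y)) (chainDist_triangle h0 hs)
    wordDist_mul_left hbasis
  exact le_antisymm ((wordDist_le x x).trans_eq (by rw [h0, NNReal.coe_zero])) (NNReal.coe_nonneg _)

end WordDist

section BirkhoffKakutani

open Classical in
noncomputable def basisWeight {X : Type*} (V : ℕ → Set X) (x : X) : ℝ≥0 :=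
  if ∃ n, x ∉ V n then (1 / 2) ^ sInf {n | x ∉ V n} else 0

lemma half_pow_le_basisWeight_iff {X : Type*} {V : ℕ → Set X} (hV : Antitone V) {x : X} {n : ℕ} :
    (1 / 2 : ℝ≥0) ^ n ≤ basisWeight V x ↔ x ∉ V n := by
  unfold basisWeight
  split_ifs with h
  · rw [pow_le_pow_iff_right_of_lt_one₀ (by norm_num) (by norm_num)]
    exact ⟨fun hle hn => Nat.sInf_mem h (hV hle hn), fun hn => Nat.sInf_le hn⟩
  · push Not at h
    simp [h]

variable {G : Type*} [Group G]

lemma basisWeight_mul_mul_le {V : ℕ → Set G} (hV : Antitone V)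
    (hcube : ∀ n, V (n + 1) * V (n + 1) * V (n + 1) ⊆ V n) (a b c : G) :
    basisWeight V (a * b * c) ≤
      2 * max (basisWeight V a) (max (basisWeight V b) (basisWeight V c)) := by
  by_cases H : ∃ n, a * b * c ∉ V n
  · set N := sInf {n | a * b * c ∉ V n}
    have hN : basisWeight V (a * b * c) = 2 * (1 / 2) ^ (N + 1) := by
      rw [basisWeight, if_pos H, pow_succ]
      ring
    rw [hN]
    gcongr
    simp only [le_max_iff, half_pow_le_basisWeight_iff hV]
    by_contra! hall
    exact Nat.sInf_mem H (hcube _ (Set.mul_mem_mul (Set.mul_mem_mul hall.1 hall.2.1) hall.2.2))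
  · rw [basisWeight, if_neg H]
    exact zero_le

variable [TopologicalSpace G] [IsTopologicalGroup G]

lemma exists_antitone_basis_nhds_one_inv_cube [FirstCountableTopology G] :
    ∃ V : ℕ → Set G, (𝓝 (1 : G)).HasAntitoneBasis V ∧ (∀ n, (V n)⁻¹ = V n) ∧
      ∀ n, V (n + 1) * V (n + 1) * V (n + 1) ⊆ V n := by
  obtain ⟨u, hu, hmul⟩ := IsTopologicalGroup.exists_antitone_basis_nhds_one G
  have hcube : ∀ n, ∀ a ∈ u (n + 2), ∀ b ∈ u (n + 2), ∀ c ∈ u (n + 2), a * b * c ∈ u n :=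
    fun n a ha b hb c hc => hmul n (Set.mul_mem_mul (hmul (n + 1) (Set.mul_mem_mul ha hb))
      (hu.antitone (Nat.le_succ _) hc))
  refine ⟨fun n => u (2 * n) ∩ (u (2 * n))⁻¹, ⟨⟨fun s => ?_⟩, ?_⟩, fun n => ?_, fun n => ?_⟩
  · constructor
    · intro hs
      obtain ⟨i, -, hi⟩ := hu.toHasBasis.mem_iff.1 hs
      exact ⟨i, trivial, Set.inter_subset_left.trans ((hu.antitone (by omega)).trans hi)⟩
    · rintro ⟨i, -, hi⟩
      exact mem_of_superset (inter_mem (hu.mem _) (inv_mem_nhds_one G (hu.mem _))) hi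
  · intro m n hmn
    exact Set.inter_subset_inter (hu.antitone (by omega))
      (Set.inv_subset_inv.2 (hu.antitone (by omega)))
  · simp [Set.inter_comm]
  · rintro _ ⟨_, ⟨a, ha, b, hb, rfl⟩, c, hc, rfl⟩
    refine ⟨hcube _ a ha.1 b hb.1 c hc.1, ?_⟩
    rw [Set.mem_inv, mul_inv_rev, mul_inv_rev, ← mul_assoc]
    exact hcube _ c⁻¹ hc.2 b⁻¹ hb.2 a⁻¹ ha.2

theorem exists_isCompatibleLeftInvariantMetric [FirstCountableTopology G] [T1Space G] :
    ∃ d : G → G → ℝ, IsCompatibleLeftInvariantMetric G d := by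
  obtain ⟨V, hV, hsymm, hcube⟩ := exists_antitone_basis_nhds_one_inv_cube (G := G)
  have hkey : ∀ {g : G} {n : ℕ}, (1 / 2 : ℝ) ^ n ≤ basisWeight V g ↔ g ∉ V n := fun {g n} => by
    rw [← half_pow_le_basisWeight_iff hV.antitone]
    exact_mod_cast Iff.rfl
  have h1 : basisWeight V 1 = 0 := by
    rw [basisWeight, if_neg (by simpa using fun n => mem_of_mem_nhds (hV.mem n))]
  have hinv : ∀ g, basisWeight V g⁻¹ = basisWeight V g := by
    intro g
    have hmem : ∀ n, g⁻¹ ∈ V n ↔ g ∈ V n := fun n => by rw [← Set.mem_inv, hsymm]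
    unfold basisWeight
    congr 1 <;> simp only [hmem]
  have h2 : ∀ g, (basisWeight V g : ℝ) ≤ 2 * wordDist (basisWeight V) 1 g := by
    intro g
    simpa [wordDist] using le_two_mul_chainDist (δ := fun a b => basisWeight V (a⁻¹ * b))
      (by simp [h1])
      (fun x y => by rw [← hinv, mul_inv_rev, inv_inv])
      (fun x₁ x₂ x₃ x₄ => by
        simpa [mul_assoc] using basisWeight_mul_mul_le hV.antitone hcube (x₁⁻¹ * x₂) (x₂⁻¹ * x₃)
          (x₃⁻¹ * x₄)) 1 g
  refine ⟨wordDist (basisWeight V), isCompatibleLeftInvariantMetric_wordDist h1 hinv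
    (hV.toHasBasis.to_hasBasis (fun n _ => ⟨(1 / 2) ^ (n + 1), by positivity, fun g hg => ?_⟩)
      (fun ε hε => ?_))⟩
  · by_contra hgV
    have hle := hkey.2 hgV
    rw [Set.mem_ofPred_eq, pow_succ] at hg
    linarith [h2 g]
  · obtain ⟨n, hn⟩ := exists_pow_lt_of_lt_one hε (by norm_num : (1 / 2 : ℝ) < 1)
    refine ⟨n, trivial, fun g hg => ?_⟩
    have hg' : (basisWeight V g : ℝ) < (1 / 2) ^ n := not_le.1 (mt hkey.1 (not_not.2 hg))
    have hle := wordDist_le (w := basisWeight V) 1 g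
    rw [inv_one, one_mul] at hle
    rw [Set.mem_ofPred_eq]
    linarith

end BirkhoffKakutani

section Metric

variable {X : Type*} {d : X → X → ℝ}

lemma IsMetric.dist_self (hd : IsMetric d) (x : X) : d x x = 0 := (hd.1 x x).2 rfl

lemma IsMetric.nonneg (hd : IsMetric d) (x y : X) : 0 ≤ d x y := by
  have := hd.2.2 x y x
  rw [hd.dist_self, hd.2.1 y x] at this
  linarith

lemma IsMetric.min_one_triangle (hd : IsMetric d) (x y z : X) :
    min (d x z) 1 ≤ min (d x y) 1 + min (d y z) 1 := by
  have := hd.nonneg x y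
  have := hd.nonneg y z
  have := hd.2.2 x y z
  simp only [min_def]
  split_ifs <;> linarith

lemma finiteDiam_of_forall_le (hd : IsMetric d) {A : Set X} {o : X} {R : ℝ}
    (h : ∀ x ∈ A, d x o ≤ R) : FiniteDiam d A :=
  ⟨2 * R, fun x hx y hy => by linarith [hd.2.2 x o y, hd.2.1 o y, h x hx, h y hy]⟩

end Metric

section OB

variable {G : Type*} [Group G] [TopologicalSpace G] {d : G → G → ℝ}

namespace IsCompatibleLeftInvariantMetric

lemma dist_eq_one_mul (hd : IsCompatibleLeftInvariantMetric G d) (x y : G) :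
    d x y = d 1 (x⁻¹ * y) := by
  rw [← hd.2.2 x 1 (x⁻¹ * y), mul_one, mul_inv_cancel_left]

lemma dist_one_inv (hd : IsCompatibleLeftInvariantMetric G d) (g : G) : d 1 g⁻¹ = d 1 g := by
  rw [← hd.2.2 g, mul_one, mul_inv_cancel, hd.1.2.1]

lemma const_mul (hd : IsCompatibleLeftInvariantMetric G d) {c : ℝ} (hc : 0 < c) :
    IsCompatibleLeftInvariantMetric G fun x y => c * d x y := by
  refine ⟨⟨fun x y => by simp [hc.ne', hd.1.1], fun x y => by simp only [hd.1.2.1 x y],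
    fun x y z => by nlinarith [hd.1.2.2 x y z]⟩, fun x s => (hd.2.1 x s).trans ⟨?_, ?_⟩,
    fun h g f => by simp only [hd.2.2]⟩
  · rintro ⟨ε, hε, hball⟩
    exact ⟨c * ε, by positivity, fun y hy => hball (lt_of_mul_lt_mul_left hy hc.le)⟩
  · rintro ⟨ε, hε, hball⟩
    refine ⟨ε / c, by positivity, fun y hy => hball ?_⟩
    simpa [lt_div_iff₀' hc] using hy

lemma exists_ball_two_subset (hd : IsCompatibleLeftInvariantMetric G d) {U : Set G}
    (hU : U ∈ 𝓝 1) :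
    ∃ d' : G → G → ℝ, IsCompatibleLeftInvariantMetric G d' ∧ {g | d' 1 g < 2} ⊆ U := by
  obtain ⟨ε, hε, hball⟩ := (hd.2.1 1 U).1 hU
  refine ⟨fun x y => 2 / ε * d x y, hd.const_mul (by positivity), fun g hg => hball ?_⟩
  have hg : 2 / ε * d 1 g < 2 / ε * ε := by rwa [div_mul_cancel₀ _ hε.ne']
  exact lt_of_mul_lt_mul_left hg (by positivity)

end IsCompatibleLeftInvariantMetric

lemma HasRelPropOB.mono {A B : Set G} (hB : HasRelPropOB G B) (hAB : A ⊆ B) :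
    HasRelPropOB G A := fun d hd =>
  let ⟨C, hC⟩ := hB d hd
  ⟨C, fun x hx y hy => hC x (hAB hx) y (hAB hy)⟩

theorem metricallyProperMetric_iff (hd : IsCompatibleLeftInvariantMetric G d) :
    MetricallyProperMetric G d ↔ ∀ r, HasRelPropOB G {x | d x 1 < r} := by
  constructor
  · intro hp r d' hd'
    by_contra hA
    have hunb : ∀ n : ℕ, ∃ x, d x 1 < r ∧ (n : ℝ) < d' x 1 := by
      intro n
      by_contra! h
      exact hA (finiteDiam_of_forall_le hd'.1 h)
    choose z hzr hzn using hunb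
    have hz := hp z ⟨d', hd', tendsto_atTop_mono (fun n => (hzn n).le)
      tendsto_natCast_atTop_atTop⟩
    obtain ⟨n, hn⟩ := (hz.eventually_ge_atTop r).exists
    linarith [hzr n]
  · rintro h σ ⟨d', hd', hσ⟩
    refine tendsto_atTop.2 fun b => ?_
    obtain ⟨C, hC⟩ := h (max b 1) d' hd'
    have h1 : (1 : G) ∈ {x | d x 1 < max b 1} := by
      simp [hd.1.dist_self]
    filter_upwards [hσ.eventually_gt_atTop C] with n hn
    by_contra! hlt
    linarith [hC (σ n) (lt_max_of_lt_left hlt) 1 h1]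

end OB

section ProperMetric

variable {G : Type*} [Group G] [TopologicalSpace G] {e : G → G → ℝ} {u : ℕ → G}

noncomputable def properWeight (e : G → G → ℝ) (u : ℕ → G) (g : G) : ℝ≥0 :=
  if e 1 g < 1 then (e 1 g).toNNReal else sInf {m | e (u m) g < 1 ∨ e (u m) g⁻¹ < 1} + 1

lemma properWeight_one (he : IsCompatibleLeftInvariantMetric G e) : properWeight e u 1 = 0 := by
  simp [properWeight, he.1.dist_self]

lemma properWeight_inv (he : IsCompatibleLeftInvariantMetric G e) (g : G) :
    properWeight e u g⁻¹ = properWeight e u g := by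
  simp only [properWeight, he.dist_one_inv, inv_inv, or_comm]

lemma properWeight_cases (he : IsCompatibleLeftInvariantMetric G e) (hu : DenseRange u) (g : G) :
    (e 1 g < 1 ∧ (properWeight e u g : ℝ) = e 1 g) ∨
      ∃ m : ℕ, (properWeight e u g : ℝ) = m + 1 ∧ (e (u m) g < 1 ∨ e (u m) g⁻¹ < 1) := by
  by_cases hg : e 1 g < 1
  · left
    simp [properWeight, hg, he.1.nonneg]
  · right
    have hne : {m | e (u m) g < 1 ∨ e (u m) g⁻¹ < 1}.Nonempty := by
      obtain ⟨m, hm⟩ := hu.mem_nhds ((he.2.1 g _).2 ⟨1, one_pos, subset_rfl⟩)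
      exact ⟨m, Or.inl ((he.1.2.1 _ _).trans_lt hm)⟩
    exact ⟨_, by simp [properWeight, hg], Nat.sInf_mem hne⟩

lemma min_one_le_properWeight (he : IsCompatibleLeftInvariantMetric G e) (g : G) :
    min (e 1 g) 1 ≤ properWeight e u g := by
  unfold properWeight
  split_ifs with hg
  · simp [he.1.nonneg]
  · push_cast
    exact (min_le_right _ _).trans (le_add_of_nonneg_left (Nat.cast_nonneg _))

theorem hasRelPropOB_wordDist_properWeight_ball (he : IsCompatibleLeftInvariantMetric G e)
    (hu : DenseRange u) (hOB : HasRelPropOB G {g | e 1 g < 2}) (r : ℝ) :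
    HasRelPropOB G {x | wordDist (properWeight e u) x 1 < r} := by
  intro d hd
  obtain ⟨C, hC⟩ := hOB d hd
  have hC' : ∀ x y, e x y < 2 → d x y ≤ C := fun x y hxy => by
    rw [hd.dist_eq_one_mul]
    exact hC 1 (by simp [he.1.dist_self]) _ (by rwa [Set.mem_ofPred_eq, ← he.dist_eq_one_mul])
  obtain ⟨M, hM⟩ := ((Set.finite_lt_nat ⌈r⌉₊).image fun m => d 1 (u m)).bddAbove
  have hstep : ∀ x y, (properWeight e u (x⁻¹ * y) : ℝ) < r →
      (e x y ≤ properWeight e u (x⁻¹ * y) ∧ (properWeight e u (x⁻¹ * y) : ℝ) < 1) ∨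
        (1 ≤ (properWeight e u (x⁻¹ * y) : ℝ) ∧ d x y ≤ M + C) := by
    intro x y hxy
    rw [he.dist_eq_one_mul x y, hd.dist_eq_one_mul x y]
    rcases properWeight_cases he hu (x⁻¹ * y) with ⟨hg, hw⟩ | ⟨m, hw, hm⟩
    · exact Or.inl ⟨hw.ge, hw ▸ hg⟩
    refine Or.inr ⟨by linarith [(Nat.cast_nonneg m : (0 : ℝ) ≤ m)], ?_⟩
    have hmr : d 1 (u m) ≤ M := hM ⟨m, Nat.lt_ceil.2 (by linarith), rfl⟩
    rcases hm with hm | hm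
    · linarith [hd.1.2.2 1 (u m) (x⁻¹ * y), hC' _ _ (hm.trans one_lt_two)]
    · rw [← hd.dist_one_inv]
      linarith [hd.1.2.2 1 (u m) (x⁻¹ * y)⁻¹, hC' _ _ (hm.trans one_lt_two)]
  obtain ⟨R, hR⟩ := exists_bound_of_chainDist_lt he.1.2.2 he.1.dist_self hd.1.2.2
    hd.1.dist_self hC' hstep
  exact finiteDiam_of_forall_le hd.1 fun x hx => hR x 1 hx

variable [IsTopologicalGroup G] [T1Space G]

lemma isCompatibleLeftInvariantMetric_wordDist_properWeight
    (he : IsCompatibleLeftInvariantMetric G e) :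
    IsCompatibleLeftInvariantMetric G (wordDist (properWeight e u)) := by
  have hlow : ∀ g, min (e 1 g) 1 ≤ wordDist (properWeight e u) 1 g :=
    le_chainDist (f := fun x y => min (e x y) 1) he.1.min_one_triangle
      (fun x y => he.dist_eq_one_mul x y ▸ min_one_le_properWeight he _) 1
  have hup : ∀ g, e 1 g < 1 → wordDist (properWeight e u) 1 g ≤ e 1 g := fun g hg =>
    (wordDist_le 1 g).trans_eq (by simp [properWeight, hg, he.1.nonneg])
  refine isCompatibleLeftInvariantMetric_wordDist (properWeight_one he) (properWeight_inv he)
    ((⟨he.2.1 1⟩ : (𝓝 (1 : G)).HasBasis _ _).to_hasBasis (fun ε hε => ?_) (fun ε hε => ?_))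
  · refine ⟨min ε 1, by positivity, fun g hg => ?_⟩
    have hmin : min (e 1 g) 1 < min ε 1 := (hlow g).trans_lt hg
    simp only [Set.mem_ofPred_eq]
    contrapose! hmin
    exact min_le_min hmin le_rfl
  · refine ⟨min ε 1, by positivity, fun g hg => ?_⟩
    exact (hup g (hg.trans_le (min_le_right _ _))).trans_lt (hg.trans_le (min_le_left _ _))

end ProperMetric

theorem exists_metrically_proper_metric_iff_local_OB {G : Type*} [Group G]
    [TopologicalSpace G] [IsTopologicalGroup G] [TopologicalSpace.MetrizableSpace G]
    [TopologicalSpace.SeparableSpace G] :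
    (∃ d : G → G → ℝ, IsCompatibleLeftInvariantMetric G d ∧ MetricallyProperMetric G d) ↔
      ∃ U ∈ nhds (1 : G), HasRelPropOB G U := by
  constructor
  · rintro ⟨d, hd, hproper⟩
    refine ⟨{x | d x 1 < 1}, (hd.2.1 1 _).2 ⟨1, one_pos, fun y hy => ?_⟩,
      (metricallyProperMetric_iff hd).1 hproper 1⟩
    rwa [Set.mem_ofPred_eq, hd.1.2.1]
  · rintro ⟨U, hU, hOB⟩
    obtain ⟨d₀, hd₀⟩ := exists_isCompatibleLeftInvariantMetric (G := G)
    obtain ⟨e, he, heU⟩ := hd₀.exists_ball_two_subset hU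
    have : Nonempty G := ⟨1⟩
    have hd := isCompatibleLeftInvariantMetric_wordDist_properWeight
      (u := TopologicalSpace.denseSeq G) he
    exact ⟨_, hd, (metricallyProperMetric_iff hd).2 (hasRelPropOB_wordDist_properWeight_ball he
      (TopologicalSpace.denseRange_denseSeq G) (hOB.mono heU))⟩
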